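/- arXiv:2507.22981 — 2 statements merged into one kernel-verified Lean document; each statement's English description precedes it below -/
import Mathlib

section
/- For all Young diagrams λ, μ, ν with λ ⊆ ν, the transposition map, sending a filling F of the cells of ν not in λ to the filling of the cells of T(ν) not in T(λ) that assigns to the cell (j,i) the value F(i,j), restricts to a bijection from the set of column-LR fillings of ν/λ with respect to μ onto the set of LR fillings of T(ν)/T(λ) of content T(μ). -/
open YoungDiagram

/-- A list of natural numbers (labels) is a *lattice word* if for every `j ≥ 1` every
prefix contains at least as many entries equal to `j` as entries equal to `j + 1`. -/
def IsLatticeWord (w : List ℕ) : Prop :=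
  ∀ j k : ℕ, 1 ≤ j → (w.take k).count (j + 1) ≤ (w.take k).count j

/-- The reverse row reading word of a filling `F` of the skew shape `ν/λ`:
each row is read right to left, rows are taken top to bottom. -/
def reverseRowWord (lam nu : YoungDiagram) (F : ℕ × ℕ → ℕ) : List ℕ :=
  (List.range (nu.colLen 0)).flatMap fun i =>
    ((List.range' (lam.rowLen i) (nu.rowLen i - lam.rowLen i)).reverse).map fun j => F (i, j)

/-- The column reading word of a filling `F` of the skew shape `ν/λ`:
each column is read bottom to top, columns are taken left to right. -/
def columnWord (lam nu : YoungDiagram) (F : ℕ × ℕ → ℕ) : List ℕ :=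
  (List.range (nu.rowLen 0)).flatMap fun j =>
    ((List.range' (lam.colLen j) (nu.colLen j - lam.colLen j)).reverse).map fun i => F (i, j)

/-- `F` is an LR filling of `ν/λ` of content `μ` (labels are positive integers). -/
def IsLRFilling (lam mu nu : YoungDiagram) (F : ℕ × ℕ → ℕ) : Prop :=
  lam ≤ nu ∧
  (∀ c ∈ nu.cells \ lam.cells, 1 ≤ F c) ∧
  (∀ i j₁ j₂ : ℕ, (i, j₁) ∈ nu.cells \ lam.cells → (i, j₂) ∈ nu.cells \ lam.cells →
    j₁ ≤ j₂ → F (i, j₁) ≤ F (i, j₂)) ∧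
  (∀ i₁ i₂ j : ℕ, (i₁, j) ∈ nu.cells \ lam.cells → (i₂, j) ∈ nu.cells \ lam.cells →
    i₁ < i₂ → F (i₁, j) < F (i₂, j)) ∧
  (∀ j : ℕ, ((nu.cells \ lam.cells).filter fun c => F c = j + 1).card = mu.rowLen j) ∧
  IsLatticeWord (reverseRowWord lam nu F)

/-- `F` is a column-LR filling of `ν/λ` with respect to `μ`. -/
def IsColumnLRFilling (lam mu nu : YoungDiagram) (F : ℕ × ℕ → ℕ) : Prop :=
  lam ≤ nu ∧
  (∀ c ∈ nu.cells \ lam.cells, 1 ≤ F c) ∧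
  (∀ i j₁ j₂ : ℕ, (i, j₁) ∈ nu.cells \ lam.cells → (i, j₂) ∈ nu.cells \ lam.cells →
    j₁ < j₂ → F (i, j₁) < F (i, j₂)) ∧
  (∀ i₁ i₂ j : ℕ, (i₁, j) ∈ nu.cells \ lam.cells → (i₂, j) ∈ nu.cells \ lam.cells →
    i₁ ≤ i₂ → F (i₁, j) ≤ F (i₂, j)) ∧
  (∀ j : ℕ, ((nu.cells \ lam.cells).filter fun c => F c = j + 1).card = mu.colLen j) ∧
  IsLatticeWord (columnWord lam nu F)

/-- The Littlewood–Richardson coefficient `c^ν_{λ,μ}`: the number of LR fillings of `ν/λ`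
of content `μ` (fillings are normalized to vanish off the skew shape). -/
noncomputable def lrCoeff (lam mu nu : YoungDiagram) : ℕ :=
  Set.ncard {F : ℕ × ℕ → ℕ | IsLRFilling lam mu nu F ∧
    ∀ c, c ∉ nu.cells \ lam.cells → F c = 0}

lemma mem_sdiff_transpose {lam nu : YoungDiagram} {c : ℕ × ℕ} :
    c ∈ nu.transpose.cells \ lam.transpose.cells ↔ c.swap ∈ nu.cells \ lam.cells := by
  simp [Finset.mem_sdiff, YoungDiagram.mem_transpose]

lemma word_transpose (lam nu : YoungDiagram) (F : ℕ × ℕ → ℕ) :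
    reverseRowWord lam.transpose nu.transpose (fun c => F c.swap) = columnWord lam nu F := by
  simp [reverseRowWord, columnWord, YoungDiagram.rowLen_transpose, YoungDiagram.colLen_transpose]

lemma word_transpose' (lam nu : YoungDiagram) (F : ℕ × ℕ → ℕ) :
    columnWord lam.transpose nu.transpose (fun c => F c.swap) = reverseRowWord lam nu F := by
  simp [reverseRowWord, columnWord, YoungDiagram.rowLen_transpose, YoungDiagram.colLen_transpose]

lemma count_transpose (lam nu : YoungDiagram) (F : ℕ × ℕ → ℕ) (j : ℕ) :
    ((nu.transpose.cells \ lam.transpose.cells).filter fun c => F c.swap = j).card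
      = ((nu.cells \ lam.cells).filter fun c => F c = j).card := by
  apply Finset.card_bij (fun c _ => c.swap)
  · intro a ha
    simp only [Finset.mem_filter] at ha ⊢
    exact ⟨mem_sdiff_transpose.mp ha.1, ha.2⟩
  · intro a _ b _ hab
    exact Prod.swap_injective hab
  · intro b hb
    refine ⟨b.swap, ?_, by simp⟩
    simp only [Finset.mem_filter] at hb ⊢
    exact ⟨mem_sdiff_transpose.mpr (by simpa using hb.1), by simpa using hb.2⟩

lemma colLR_to_LR {lam mu nu : YoungDiagram} {F : ℕ × ℕ → ℕ}
    (hF : IsColumnLRFilling lam mu nu F) :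
    IsLRFilling lam.transpose mu.transpose nu.transpose (fun c => F c.swap) := by
  obtain ⟨hle, hpos, hrow, hcol, hcount, hword⟩ := hF
  refine ⟨YoungDiagram.transpose_mono hle, ?_, ?_, ?_, ?_, ?_⟩
  · intro c hc; exact hpos c.swap (mem_sdiff_transpose.mp hc)
  · intro i j₁ j₂ h1 h2 hle'
    exact hcol j₁ j₂ i (mem_sdiff_transpose.mp h1) (mem_sdiff_transpose.mp h2) hle'
  · intro i₁ i₂ j h1 h2 hlt
    exact hrow j i₁ i₂ (mem_sdiff_transpose.mp h1) (mem_sdiff_transpose.mp h2) hlt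
  · intro j
    rw [YoungDiagram.rowLen_transpose]
    exact (count_transpose lam nu F (j + 1)).trans (hcount j)
  · rw [word_transpose]; exact hword

lemma LR_to_colLR {lam mu nu : YoungDiagram} {F : ℕ × ℕ → ℕ}
    (hF : IsLRFilling lam mu nu F) :
    IsColumnLRFilling lam.transpose mu.transpose nu.transpose (fun c => F c.swap) := by
  obtain ⟨hle, hpos, hrow, hcol, hcount, hword⟩ := hF
  refine ⟨YoungDiagram.transpose_mono hle, ?_, ?_, ?_, ?_, ?_⟩
  · intro c hc; exact hpos c.swap (mem_sdiff_transpose.mp hc)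
  · intro i j₁ j₂ h1 h2 hlt
    exact hcol j₁ j₂ i (mem_sdiff_transpose.mp h1) (mem_sdiff_transpose.mp h2) hlt
  · intro i₁ i₂ j h1 h2 hle'
    exact hrow j i₁ i₂ (mem_sdiff_transpose.mp h1) (mem_sdiff_transpose.mp h2) hle'
  · intro j
    rw [YoungDiagram.colLen_transpose]
    exact (count_transpose lam nu F (j + 1)).trans (hcount j)
  · rw [word_transpose']; exact hword

/-- The transposition map on fillings, sending a filling `F` of `ν/λ` to the filling
`T(F)` of `T(ν)/T(λ)` with `T(F)(j,i) = F(i,j)`, restricts to a bijection from the set of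
column-LR fillings of `ν/λ` with respect to `μ` onto the set of LR fillings of
`T(ν)/T(λ)` of content `T(μ)`. -/
theorem transpose_bijOn_columnLR (lam mu nu : YoungDiagram) (h : lam ≤ nu) :
    Set.BijOn (fun (F : ℕ × ℕ → ℕ) => fun c => F c.swap)
      {F : ℕ × ℕ → ℕ | IsColumnLRFilling lam mu nu F}
      {G : ℕ × ℕ → ℕ | IsLRFilling lam.transpose mu.transpose nu.transpose G} := by
  have key : ∀ F : ℕ × ℕ → ℕ, IsColumnLRFilling lam mu nu F ↔
      IsLRFilling lam.transpose mu.transpose nu.transpose (fun c => F c.swap) := by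
    intro F
    constructor
    · exact colLR_to_LR
    · intro hG
      have := LR_to_colLR hG
      simpa [YoungDiagram.transpose_transpose] using this
  refine ⟨fun F hF => (key F).mp hF, ?_, ?_⟩
  · intro F _ G _ hFG
    funext c
    have := congrFun hFG c.swap
    simpa using this
  · intro G hG
    refine ⟨fun c => G c.swap, ?_, ?_⟩
    · apply (key _).mpr
      have : (fun c : ℕ × ℕ => G c.swap.swap) = G := by funext c; simp
      simpa [this] using hG
    · funext c; simp
end

section
/- Minimal N for a Young diagram pair: Let ρ be a nonempty Young diagram with c = cols(ρ) columns, let σ be any Young diagram with d = cols(σ) columns, and let N be a natural number. Then the sequence (N − ρ'_c, N − ρ'_{c−1}, …, N − ρ'_1, σ'_1, …, σ'_d) is a non-increasing sequence of non-negative integers — equivalently, Φ_N(ρ,σ) is a well-defined Young diagram — if and only if N ≥ rows(ρ) + rows(σ), i.e., if and only if N is at least the total number of rows of the Young diagram pair (ρ̄, σ). -/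
open YoungDiagram

/-!
The sequence is the concatenation of two non-increasing blocks, `N - ρ'_{c-k}` and `σ'_j`
(column lengths are antitone). Such a concatenation is non-increasing iff the last entry
`N - ρ'_1` of the first block dominates the first entry `σ'_1` of the second, and its entries
are non-negative iff `N - ρ'_1 ≥ 0`. When `σ` is empty, `σ'_1 = 0`, so in all cases the two
conditions together say `ρ'_1 + σ'_1 ≤ N`.
-/

namespace List

variable {α : Type*} [Preorder α] {f g : ℕ → α}

theorem pairwise_ge_map_range_append_iff (hf : Antitone f) (hg : Antitone g) {m : ℕ}
    (hm : 0 < m) (n : ℕ) :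
    ((range m).map f ++ (range n).map g).Pairwise (· ≥ ·) ↔ (0 < n → g 0 ≤ f (m - 1)) := by
  have hsorted {h : ℕ → α} (hh : Antitone h) (k : ℕ) : ((range k).map h).Pairwise (· ≥ ·) :=
    pairwise_map.mpr (pairwise_lt_range.imp fun hij => hh hij.le)
  simp only [pairwise_append, hsorted hf, hsorted hg, true_and, mem_map, mem_range,
    forall_exists_index, and_imp, forall_apply_eq_imp_iff₂]
  refine ⟨fun h hn => h (m - 1) (by omega) 0 hn, fun h i hi j hj => ?_⟩
  calc g j ≤ g 0 := hg (Nat.zero_le j)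
    _ ≤ f (m - 1) := h (by omega)
    _ ≤ f i := hf (by omega)

theorem forall_mem_map_range_ge_iff (hf : Antitone f) {m : ℕ} (hm : 0 < m) (a : α) :
    (∀ x ∈ (range m).map f, a ≤ x) ↔ a ≤ f (m - 1) := by
  simp only [mem_map, mem_range, forall_exists_index, and_imp, forall_apply_eq_imp_iff₂]
  exact ⟨fun h => h (m - 1) (by omega), fun h i hi => h.trans (hf (by omega))⟩

end List

namespace YoungDiagram

theorem zero_lt_rowLen_zero_iff_zero_lt_colLen_zero (μ : YoungDiagram) :
    0 < μ.rowLen 0 ↔ 0 < μ.colLen 0 :=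
  mem_iff_lt_rowLen.symm.trans mem_iff_lt_colLen

theorem zero_lt_rowLen_zero_of_nonempty {μ : YoungDiagram} (hμ : μ.cells.Nonempty) :
    0 < μ.rowLen 0 := by
  obtain ⟨⟨i, j⟩, hij⟩ := hμ
  exact mem_iff_lt_rowLen.mp (μ.up_left_mem (Nat.zero_le i) (Nat.zero_le j) hij)

end YoungDiagram

-- Columns are indexed from `0`: the paper's `ρ'_k` is `ρ.colLen (k - 1)`.
/-- **Minimal `N` for a Young diagram pair**: for a nonempty Young diagram `ρ` with
`c = cols ρ` columns, any Young diagram `σ` with `d = cols σ` columns, and any `N : ℕ`,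
the integer sequence `(N - ρ'_c, …, N - ρ'_1, σ'_1, …, σ'_d)` is a non-increasing
sequence of non-negative integers — i.e. `Φ_N(ρ,σ)` is a well-defined Young diagram —
if and only if `N ≥ rows ρ + rows σ` (columns are indexed from `0` here, so the paper's
`ρ'_k` is `ρ.colLen (k-1)`). -/
theorem pair_min_N (ρ σ : YoungDiagram) (hρ : ρ.cells.Nonempty) (N : ℕ) :
    (((List.range (ρ.rowLen 0)).map
          (fun k => (N : ℤ) - (ρ.colLen (ρ.rowLen 0 - 1 - k) : ℤ))
        ++ (List.range (σ.rowLen 0)).map (fun j => (σ.colLen j : ℤ))).Pairwise (· ≥ ·)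
      ∧ ∀ x ∈ ((List.range (ρ.rowLen 0)).map
          (fun k => (N : ℤ) - (ρ.colLen (ρ.rowLen 0 - 1 - k) : ℤ))
        ++ (List.range (σ.rowLen 0)).map (fun j => (σ.colLen j : ℤ))), 0 ≤ x)
    ↔ ρ.colLen 0 + σ.colLen 0 ≤ N := by
  have hc := zero_lt_rowLen_zero_of_nonempty hρ
  have hσ := σ.zero_lt_rowLen_zero_iff_zero_lt_colLen_zero
  have hf : Antitone fun k => (N : ℤ) - (ρ.colLen (ρ.rowLen 0 - 1 - k) : ℤ) := fun _ _ hkl =>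
    sub_le_sub_left (Nat.cast_le.mpr (ρ.colLen_anti _ _ (Nat.sub_le_sub_left hkl _))) _
  have hg : Antitone fun j => (σ.colLen j : ℤ) := fun _ _ hij =>
    Nat.cast_le.mpr (σ.colLen_anti _ _ hij)
  rw [List.pairwise_ge_map_range_append_iff hf hg hc, List.forall_mem_append,
    List.forall_mem_map_range_ge_iff hf hc]
  simp only [Nat.sub_self, List.mem_map, List.mem_range, forall_exists_index, and_imp,
    forall_apply_eq_imp_iff₂, Nat.cast_nonneg, implies_true, and_true]
  omega
end
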